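/- Define u₀ := 0, u_{n+1} := L(u_n), and let u(x) := Σ_{j=1}^{∞} i_j(x)·4^{−j} on [0,1)². Then for every n ∈ ℕ and every x ∈ [0,1)² one has 0 ≤ u(x) − u_n(x) < 4^{−n}. In particular, u_n converges to u uniformly on [0,1)². -/

import Mathlib

/-! Writing `x = B_k y` with `y ∈ [0,1)²`, the first quadrant digit of `x` is `k`, the later
digits of `x` are those of `y`, and `L v (B_k y) = k/4 + v y/4`; so by induction `u_n` is the
`n`-th partial sum of the base-4 series defining `u`. Hence `u − u_n` is `4^{-n}` times a
base-4 series with digits in `{0,…,3}`, which is `< 1` because the binary expansion of `x₁`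
has infinitely many zeros, and at each of them the quadrant digit is at most `2`. -/

open MeasureTheory Set Filter
open scoped ENNReal NNReal

noncomputable section

/-- The half-open unit square `[0,1)²` in `ℝ²`. -/
def unitSq : Set (ℝ × ℝ) := Set.Ico (0:ℝ) 1 ×ˢ Set.Ico (0:ℝ) 1

/-- The four contractions `B₀, B₁, B₂, B₃` mapping `[0,1)²` onto its four half-open
dyadic subsquares (lower-left, lower-right, upper-left, upper-right). -/
def Bmap (i : Fin 4) (x : ℝ × ℝ) : ℝ × ℝ :=
  (x.1 / 2 + (if i.val % 2 = 1 then (1:ℝ)/2 else 0),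
   x.2 / 2 + (if 2 ≤ i.val then (1:ℝ)/2 else 0))

/-- The inverse maps `A₀, A₁, A₂, A₃` of `B₀, …, B₃`. -/
def Amap (i : Fin 4) (x : ℝ × ℝ) : ℝ × ℝ :=
  (2 * x.1 - (if i.val % 2 = 1 then (1:ℝ) else 0),
   2 * x.2 - (if 2 ≤ i.val then (1:ℝ) else 0))

/-- The four half-open dyadic subsquares `Q₀, Q₁, Q₂, Q₃` of `[0,1)²`. -/
def Qsub (i : Fin 4) : Set (ℝ × ℝ) := Bmap i '' unitSq

/-- The step function `ū = Σ_{i=0}^{3} (i/4)·1_{Q_i}`. -/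
def ubar (x : ℝ × ℝ) : ℝ :=
  ∑ i : Fin 4, ((i.val : ℝ) / 4) * (Qsub i).indicator (fun _ => (1:ℝ)) x

/-- The operator `L`: `(Lv)(x) = ū(x) + (1/4) Σ_i v(A_i x)·1_{Q_i}(x)` on `[0,1)²`,
extended by `0` outside. -/
def Lop (v : ℝ × ℝ → ℝ) : ℝ × ℝ → ℝ :=
  unitSq.indicator fun x =>
    ubar x + (1/4) * ∑ i : Fin 4, (Qsub i).indicator (fun y => v (Amap i y)) x

/-- The `j`-th binary digit `a_j(s) = ⌊2^j s⌋ − 2⌊2^{j−1} s⌋` of `s ∈ [0,1)` (`j ≥ 1`). -/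
def bdigit (j : ℕ) (s : ℝ) : ℤ := ⌊(2:ℝ)^j * s⌋ - 2 * ⌊(2:ℝ)^(j-1) * s⌋

/-- The `j`-th quadrant digit `i_j(x) = a_j(x₁) + 2 a_j(x₂) ∈ {0,1,2,3}` of `x ∈ [0,1)²`. -/
def qdigit (j : ℕ) (x : ℝ × ℝ) : ℤ := bdigit j x.1 + 2 * bdigit j x.2

/-- The Flat Mountain function `u(x) = Σ_{j≥1} i_j(x)·4^{−j}` on `[0,1)²`, `0` outside. -/
def uFM : ℝ × ℝ → ℝ :=
  unitSq.indicator fun x => ∑' j : ℕ, (qdigit (j+1) x : ℝ) / 4^(j+1)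

/-- The iterates `u₀ = 0`, `u_{n+1} = L u_n`. -/
def uIter : ℕ → ℝ × ℝ → ℝ
  | 0 => fun _ => 0
  | (n+1) => Lop (uIter n)

/-- The dyadic square `Q_{i₁,…,i_n} = B_{i₁} ∘ ⋯ ∘ B_{i_n} ([0,1)²)` indexed by a finite
sequence of quadrant digits. -/
def Qseq : List (Fin 4) → Set (ℝ × ℝ)
  | [] => unitSq
  | (i :: l) => Bmap i '' Qseq l

/-- The `j`-th base-4 digit `t_j = ⌊4^j t⌋ − 4⌊4^{j−1} t⌋` of `t ∈ [0,1)` (`j ≥ 1`). -/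
def tdigit (j : ℕ) (t : ℝ) : ℤ := ⌊(4:ℝ)^j * t⌋ - 4 * ⌊(4:ℝ)^(j-1) * t⌋

/-- The Lebesgue (Z-order) space-filling curve `γ`. -/
def lcurve (t : ℝ) : ℝ × ℝ :=
  (∑' j : ℕ, ((tdigit (j+1) t % 2 : ℤ) : ℝ) / 2^(j+1),
   ∑' j : ℕ, ((tdigit (j+1) t / 2 : ℤ) : ℝ) / 2^(j+1))

end

section DigitSeries

variable {b : ℝ} {d : ℕ → ℝ}

lemma hasSum_sub_one_div_pow (hb : 1 < b) : HasSum (fun j : ℕ => (b - 1) / b ^ (j + 1)) 1 := by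
  have hgeom := (hasSum_geometric_of_lt_one (inv_nonneg.2 (zero_le_one.trans hb.le))
    (inv_lt_one_of_one_lt₀ hb)).mul_left ((b - 1) / b)
  have hb0 : b ≠ 0 := by positivity
  have hb1 : b - 1 ≠ 0 := (sub_pos.2 hb).ne'
  have hsum : (b - 1) / b * (1 - b⁻¹)⁻¹ = 1 := by field_simp
  rw [hsum] at hgeom
  refine hgeom.congr_fun fun j => ?_
  rw [inv_pow, pow_succ]
  field_simp

lemma summable_digits_div_pow (hb : 1 < b) (hd0 : ∀ j, 0 ≤ d j) (hd : ∀ j, d j ≤ b - 1) :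
    Summable fun j : ℕ => d j / b ^ (j + 1) :=
  (hasSum_sub_one_div_pow hb).summable.of_nonneg_of_le
    (fun j => div_nonneg (hd0 j) (by positivity)) fun j => by gcongr; exact hd j

lemma tsum_digits_div_pow_lt_one (hb : 1 < b) (hd0 : ∀ j, 0 ≤ d j) (hd : ∀ j, d j ≤ b - 1)
    {m : ℕ} (hm : d m < b - 1) : ∑' j : ℕ, d j / b ^ (j + 1) < 1 :=
  (hasSum_sub_one_div_pow hb).tsum_eq ▸
    Summable.tsum_lt_tsum_of_nonneg (fun j => div_nonneg (hd0 j) (by positivity))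
      (fun j => by gcongr; exact hd j) (by gcongr) (hasSum_sub_one_div_pow hb).summable

lemma tsum_div_pow_sub_sum_range (hb : b ≠ 0) (hf : Summable fun j : ℕ => d j / b ^ (j + 1))
    (n : ℕ) :
    ∑' j : ℕ, d j / b ^ (j + 1) - ∑ j ∈ Finset.range n, d j / b ^ (j + 1) =
      (b ^ n)⁻¹ * ∑' j : ℕ, d (j + n) / b ^ (j + 1) := by
  rw [← hf.sum_add_tsum_nat_add n, add_sub_cancel_left, ← tsum_mul_left]
  congr 1 with j
  rw [pow_add]
  field_simp
  ring_nf

end DigitSeries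

section BinaryDigits

lemma bdigit_succ (j : ℕ) (s : ℝ) : bdigit (j + 1) s = ⌊2 * (2 ^ j * s)⌋ - 2 * ⌊2 ^ j * s⌋ := by
  rw [bdigit, Nat.add_sub_cancel, pow_succ', mul_assoc]

lemma bdigit_succ_eq_zero_or_eq_one (j : ℕ) (s : ℝ) :
    bdigit (j + 1) s = 0 ∨ bdigit (j + 1) s = 1 := by
  rw [bdigit_succ]
  set t := (2 : ℝ) ^ j * s
  have hlow : 2 * ⌊t⌋ ≤ ⌊2 * t⌋ := Int.le_floor.2 (by push_cast; linarith [Int.floor_le t])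
  have hupp : ⌊2 * t⌋ < 2 * ⌊t⌋ + 2 :=
    Int.floor_lt.2 (by push_cast; linarith [Int.lt_floor_add_one t])
  omega

lemma exists_bdigit_eq_zero (s : ℝ) (n : ℕ) : ∃ m, bdigit (m + n + 1) s = 0 := by
  by_contra! hone
  replace hone : ∀ m, bdigit (m + n + 1) s = 1 := fun m =>
    (bdigit_succ_eq_zero_or_eq_one (m + n) s).resolve_left (hone m)
  -- the distance from `2 ^ k * s` up to the next integer doubles at every digit `1`
  set gap : ℕ → ℝ := fun m => ⌊2 ^ (m + n) * s⌋ + 1 - 2 ^ (m + n) * s with hgap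
  have hdouble : ∀ m, gap (m + 1) = 2 * gap m := fun m => by
    have h := hone m
    rw [bdigit_succ, ← mul_assoc, ← pow_succ'] at h
    simp only [hgap, Nat.add_right_comm m 1 n, show ⌊2 ^ (m + n + 1) * s⌋ =
      2 * ⌊2 ^ (m + n) * s⌋ + 1 by omega]
    push_cast
    ring
  have hpow : ∀ m, gap m = 2 ^ m * gap 0 := fun m => by
    induction m with
    | zero => simp
    | succ m ih => rw [hdouble, ih, pow_succ]; ring
  have hpos : 0 < gap 0 := by simp only [hgap]; linarith [Int.lt_floor_add_one (2 ^ (0 + n) * s)]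
  obtain ⟨m, hm⟩ := pow_unbounded_of_one_lt (gap 0)⁻¹ one_lt_two
  have hle : gap m ≤ 1 := by simp only [hgap]; linarith [Int.floor_le (2 ^ (m + n) * s)]
  rw [hpow, ← le_div_iff₀ hpos, one_div] at hle
  exact hle.not_gt hm

lemma bdigit_one_add_div_two {s : ℝ} (hs : s ∈ Ico (0 : ℝ) 1) {c : ℤ} (hc : c = 0 ∨ c = 1) :
    bdigit 1 ((s + c) / 2) = c := by
  have hfloor : ⌊s + c⌋ = c := by rw [Int.floor_add_intCast, Int.floor_eq_zero_iff.2 hs, zero_add]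
  have hhalf : ⌊(s + c) / 2⌋ = 0 := by
    rw [Int.floor_eq_zero_iff]
    rcases hc with rfl | rfl <;> constructor <;> push_cast <;> linarith [hs.1, hs.2]
  simp [bdigit, mul_div_cancel₀, hfloor, hhalf]

lemma bdigit_add_two_add_div_two (j : ℕ) (s : ℝ) (c : ℤ) :
    bdigit (j + 2) ((s + c) / 2) = bdigit (j + 1) s := by
  have hhi : (2 : ℝ) ^ (j + 2) * ((s + c) / 2) = 2 ^ (j + 1) * s + ((2 ^ (j + 1) * c : ℤ) : ℝ) := by
    push_cast; ring
  have hlo : (2 : ℝ) ^ (j + 1) * ((s + c) / 2) = 2 ^ j * s + ((2 ^ j * c : ℤ) : ℝ) := by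
    push_cast; ring
  simp only [bdigit, Nat.add_sub_cancel, show j + 2 - 1 = j + 1 from rfl, hhi, hlo,
    Int.floor_add_intCast]
  ring

end BinaryDigits

section Quadrants

lemma Bmap_eq (i : Fin 4) (y : ℝ × ℝ) :
    Bmap i y = ((y.1 + ((i : ℤ) % 2 : ℤ)) / 2, (y.2 + ((i : ℤ) / 2 : ℤ)) / 2) := by
  fin_cases i <;> ext <;> simp [Bmap] <;> ring

lemma Amap_Bmap (i : Fin 4) (y : ℝ × ℝ) : Amap i (Bmap i y) = y := by
  fin_cases i <;> ext <;> simp [Amap, Bmap] <;> ring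

lemma qdigit_one_Bmap {y : ℝ × ℝ} (hy : y ∈ unitSq) (i : Fin 4) : qdigit 1 (Bmap i y) = i := by
  have hi := i.isLt
  rw [qdigit, Bmap_eq, bdigit_one_add_div_two hy.1 (by omega),
    bdigit_one_add_div_two hy.2 (by omega), Int.emod_add_mul_ediv]

lemma qdigit_add_two_Bmap (j : ℕ) (y : ℝ × ℝ) (i : Fin 4) :
    qdigit (j + 2) (Bmap i y) = qdigit (j + 1) y := by
  simp only [qdigit, Bmap_eq, bdigit_add_two_add_div_two]

lemma Bmap_mem_unitSq {y : ℝ × ℝ} (hy : y ∈ unitSq) (i : Fin 4) : Bmap i y ∈ unitSq := by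
  obtain ⟨⟨h1, h2⟩, h3, h4⟩ := hy
  refine ⟨⟨?_, ?_⟩, ?_, ?_⟩ <;> simp only [Bmap] <;> split_ifs <;> linarith

lemma Bmap_mem_Qsub_iff {y : ℝ × ℝ} (hy : y ∈ unitSq) {i k : Fin 4} :
    Bmap k y ∈ Qsub i ↔ i = k := by
  refine ⟨fun ⟨z, hz, hzy⟩ => ?_, fun h => h ▸ mem_image_of_mem _ hy⟩
  have h := qdigit_one_Bmap hz i
  rw [hzy, qdigit_one_Bmap hy] at h
  exact Fin.ext (by omega)

lemma exists_eq_Bmap {x : ℝ × ℝ} (hx : x ∈ unitSq) : ∃ i, ∃ y ∈ unitSq, x = Bmap i y := by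
  obtain ⟨⟨h1, h2⟩, h3, h4⟩ := hx
  have key : ∀ s : ℝ, 0 ≤ s → s < 1 → 2 * s ∈ Ico (0 : ℝ) 1 ∨ 2 * s - 1 ∈ Ico (0 : ℝ) 1 := by
    intro s hs0 hs1
    by_cases hs : s < 1 / 2
    · exact .inl ⟨by linarith, by linarith⟩
    · exact .inr ⟨by linarith, by linarith⟩
  rcases key x.1 h1 h2 with ha | ha <;> rcases key x.2 h3 h4 with hb | hb
  · exact ⟨0, (_, _), ⟨ha, hb⟩, by ext <;> simp [Bmap]⟩
  · exact ⟨2, (_, _), ⟨ha, hb⟩, by ext <;> simp [Bmap]; ring⟩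
  · exact ⟨1, (_, _), ⟨ha, hb⟩, by ext <;> simp [Bmap]; ring⟩
  · exact ⟨3, (_, _), ⟨ha, hb⟩, by ext <;> simp [Bmap] <;> ring⟩

lemma Lop_Bmap (v : ℝ × ℝ → ℝ) {y : ℝ × ℝ} (hy : y ∈ unitSq) (k : Fin 4) :
    Lop v (Bmap k y) = k / 4 + v y / 4 := by
  have hind : ∀ (i : Fin 4) (f : ℝ × ℝ → ℝ),
      (Qsub i).indicator f (Bmap k y) = if i = k then f (Bmap k y) else 0 := fun i f => by
    split_ifs with h
    · exact indicator_of_mem (h ▸ mem_image_of_mem _ hy) f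
    · exact indicator_of_notMem (mt (Bmap_mem_Qsub_iff hy).1 h) f
  simp only [Lop, ubar, indicator_of_mem (Bmap_mem_unitSq hy k), hind, mul_ite, mul_zero,
    Finset.sum_ite_eq', Finset.mem_univ, if_true, Amap_Bmap]
  ring

end Quadrants

lemma qdigit_succ_nonneg (j : ℕ) (x : ℝ × ℝ) : 0 ≤ qdigit (j + 1) x := by
  rcases bdigit_succ_eq_zero_or_eq_one j x.1 with h1 | h1 <;>
    rcases bdigit_succ_eq_zero_or_eq_one j x.2 with h2 | h2 <;> simp [qdigit, h1, h2]

lemma qdigit_succ_le_three (j : ℕ) (x : ℝ × ℝ) : qdigit (j + 1) x ≤ 3 := by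
  rcases bdigit_succ_eq_zero_or_eq_one j x.1 with h1 | h1 <;>
    rcases bdigit_succ_eq_zero_or_eq_one j x.2 with h2 | h2 <;> simp [qdigit, h1, h2]

lemma qdigit_succ_lt_three {j : ℕ} {x : ℝ × ℝ} (h : bdigit (j + 1) x.1 = 0) :
    qdigit (j + 1) x < 3 := by
  rcases bdigit_succ_eq_zero_or_eq_one j x.2 with h2 | h2 <;> simp [qdigit, h, h2]

lemma uIter_eq_sum (n : ℕ) {x : ℝ × ℝ} (hx : x ∈ unitSq) :
    uIter n x = ∑ j ∈ Finset.range n, (qdigit (j + 1) x : ℝ) / 4 ^ (j + 1) := by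
  induction n generalizing x with
  | zero => simp [uIter]
  | succ n ih =>
    obtain ⟨k, y, hy, rfl⟩ := exists_eq_Bmap hx
    rw [uIter, Lop_Bmap _ hy, ih hy, Finset.sum_range_succ', Finset.sum_div]
    simp only [qdigit_add_two_Bmap, qdigit_one_Bmap hy, pow_succ, div_div]
    push_cast
    ring

/-- Part (ii) of the explicit-formula lemma: `0 ≤ u − u_n < 4^{−n}` on `[0,1)²`; in
particular the iterates `u_n` converge uniformly to `u` on `[0,1)²`. -/
theorem stmt9 (n : ℕ) (x : ℝ × ℝ) (hx : x ∈ unitSq) :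
    0 ≤ uFM x - uIter n x ∧ uFM x - uIter n x < 1 / 4 ^ n := by
  set d : ℕ → ℝ := fun j => qdigit (j + 1) x
  have hd0 : ∀ j, 0 ≤ d j := fun j => Int.cast_nonneg (qdigit_succ_nonneg j x)
  have hd3 : ∀ j, d j ≤ 4 - 1 := fun j =>
    (Int.cast_le.2 (qdigit_succ_le_three j x)).trans_eq (by norm_num)
  have htail : uFM x - uIter n x = (4 ^ n)⁻¹ * ∑' j, d (j + n) / 4 ^ (j + 1) := by
    rw [uFM, indicator_of_mem hx, uIter_eq_sum n hx]
    exact tsum_div_pow_sub_sum_range four_ne_zero (summable_digits_div_pow (by norm_num) hd0 hd3) n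
  obtain ⟨m, hm⟩ := exists_bdigit_eq_zero x.1 n
  have hlt : d (m + n) < 4 - 1 :=
    (Int.cast_lt.2 (qdigit_succ_lt_three hm)).trans_eq (by norm_num)
  rw [htail, one_div]
  constructor
  · exact mul_nonneg (by positivity) (tsum_nonneg fun j => div_nonneg (hd0 _) (by positivity))
  · exact mul_lt_of_lt_one_right (by positivity)
      (tsum_digits_div_pow_lt_one (by norm_num) (fun j => hd0 _) (fun j => hd3 _) hlt)
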